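/- Let θ̄ = (θ₁, …, θ_N) ∈ [0, 2π]^N with diameter d(θ̄) < π, and let L be a shortest closed arc containing all e^{iθ_j}. Suppose each jump map Ψ_i satisfies Assumption 1 and that the jump occurs only when some oscillator j₀ has θ_{j₀} ∈ {0, 2π} (so 1 ∈ L). Then the post-jump phases θ_i⁺ = Ψ_i^{k_i}(θ_i) mod 2π all satisfy e^{iθ_i⁺} ∈ L, and hence d(θ̄⁺) ≤ d(θ̄). -/

import Mathlib

/-!
Since the arc `L` has length `d < π` and contains `1`, a shift of its parameter by a multiple
of `2π` writes it as `[β, β + d]` with `-d ≤ β ≤ 0`. A phase in `[0, 2π]` lies on `L` iff it lies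
in `[0, β + d] ∪ [2π + β, 2π]`. The first interval sits in `[0, π)`, where `Ψ` moves phases
towards `0` without crossing it, the second in `(π, 2π]`, where `Ψ` moves them towards `2π`;
so both are `Ψ`-invariant, every post-jump phase stays on `L`, and `L` itself is an arc of
length `d` witnessing `d(θ̄⁺) ≤ d`.
-/

open Real Set Function

/-- Shortest-arc diameter of a phase tuple. -/
noncomputable def phaseDiam {N : ℕ} (θ : Fin N → ℝ) : ℝ :=
  sInf {l : ℝ | 0 ≤ l ∧ ∃ α : ℝ, ∀ j, ∃ φ ∈ Set.Icc α (α + l),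
    Complex.exp (Complex.I * (θ j : ℂ)) = Complex.exp (Complex.I * (φ : ℂ))}

lemma exp_I_mul_eq_exp_I_mul_iff {x y : ℝ} :
    Complex.exp (Complex.I * x) = Complex.exp (Complex.I * y) ↔
      ∃ m : ℤ, x = y + m * (2 * π) := by
  simp only [mul_comm Complex.I, ← Circle.coe_exp, ← Circle.exp_eq_exp, Circle.ext_iff]

def circleArc (α l : ℝ) : Set ℂ :=
  {z : ℂ | ∃ φ ∈ Icc α (α + l), z = Complex.exp (Complex.I * (φ : ℂ))}

lemma exp_I_mul_mem_circleArc_iff {α l x : ℝ} :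
    Complex.exp (Complex.I * x) ∈ circleArc α l ↔ ∃ m : ℤ, x - m * (2 * π) ∈ Icc α (α + l) := by
  simp only [circleArc, mem_ofPred_eq, exp_I_mul_eq_exp_I_mul_iff]
  constructor
  · rintro ⟨φ, hφ, m, rfl⟩
    exact ⟨m, by simpa using hφ⟩
  · rintro ⟨m, hm⟩
    exact ⟨_, hm, m, by ring⟩

lemma circleArc_add_int_mul_two_pi (α l : ℝ) (n : ℤ) :
    circleArc (α + n * (2 * π)) l = circleArc α l := by
  ext z
  constructor <;> rintro ⟨φ, hφ, rfl⟩ <;> rw [exp_I_mul_mem_circleArc_iff]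
  · exact ⟨n, by constructor <;> linarith [hφ.1, hφ.2]⟩
  · exact ⟨-n, by push_cast; constructor <;> linarith [hφ.1, hφ.2]⟩

lemma exists_circleArc_eq_of_one_mem {α l : ℝ} (h : 1 ∈ circleArc α l) :
    ∃ β ∈ Icc (-l) 0, circleArc β l = circleArc α l := by
  rw [← Complex.exp_zero, ← mul_zero Complex.I, ← Complex.ofReal_zero,
    exp_I_mul_mem_circleArc_iff] at h
  obtain ⟨m, hm₁, hm₂⟩ := h
  exact ⟨α + m * (2 * π), ⟨by linarith, by linarith⟩, circleArc_add_int_mul_two_pi α l m⟩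

lemma exp_I_mul_mem_circleArc_of_mem_union {β l x : ℝ} (hβ : β ∈ Icc (-l) 0)
    (hx : x ∈ Icc 0 (β + l) ∪ Icc (2 * π + β) (2 * π)) :
    Complex.exp (Complex.I * x) ∈ circleArc β l := by
  rw [exp_I_mul_mem_circleArc_iff]
  rcases hx with ⟨hx₁, hx₂⟩ | ⟨hx₁, hx₂⟩
  · exact ⟨0, by constructor <;> push_cast <;> linarith [hβ.2]⟩
  · exact ⟨1, by constructor <;> push_cast <;> linarith [hβ.1]⟩

lemma mem_union_of_exp_I_mul_mem_circleArc {β l x : ℝ} (hl : l < π) (hβ : β ∈ Icc (-l) 0)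
    (hx : x ∈ Icc 0 (2 * π)) (hxL : Complex.exp (Complex.I * x) ∈ circleArc β l) :
    x ∈ Icc 0 (β + l) ∪ Icc (2 * π + β) (2 * π) := by
  obtain ⟨m, hm₁, hm₂⟩ := exp_I_mul_mem_circleArc_iff.1 hxL
  -- the lift `x - 2πm` lies in `(-π, π)` while `x ∈ [0, 2π]`
  have hm : m = 0 ∨ m = 1 := by
    have hlo' : -π < m * (2 * π) := by linarith [hβ.2, hx.1]
    have hhi' : m * (2 * π) < 3 * π := by linarith [hβ.1, hx.2]
    have hlo : (-1 : ℝ) < m := by nlinarith [pi_pos]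
    have hhi : (m : ℝ) < 2 := by nlinarith [pi_pos]
    have : -1 < m ∧ m < 2 := ⟨by exact_mod_cast hlo, by exact_mod_cast hhi⟩
    omega
  rcases hm with rfl | rfl
  · left; exact ⟨hx.1, by simpa using hm₂⟩
  · right; exact ⟨by push_cast at hm₁; linarith, hx.2⟩

lemma phaseDiam_nonneg {N : ℕ} (θ : Fin N → ℝ) : 0 ≤ phaseDiam θ :=
  Real.sInf_nonneg fun _ hl => hl.1

lemma phaseDiam_le_of_forall_mem_circleArc {N : ℕ} {θ : Fin N → ℝ} {α l : ℝ} (hl : 0 ≤ l)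
    (h : ∀ j, Complex.exp (Complex.I * (θ j : ℂ)) ∈ circleArc α l) : phaseDiam θ ≤ l :=
  csInf_le ⟨0, fun _ hl => hl.1⟩ ⟨hl, α, h⟩

lemma mapsTo_Icc_zero_of_lt_pi {Ψ : ℝ → ℝ} {c : ℝ} (h0 : Ψ 0 = 0)
    (hlow : ∀ φ ∈ Ioo 0 π, Ψ φ ∈ Ioo 0 φ) (hc : c < π) : MapsTo Ψ (Icc 0 c) (Icc 0 c) := by
  rintro x ⟨hx₀, hxc⟩
  rcases hx₀.eq_or_lt with rfl | hx₀
  · rw [h0]; exact ⟨le_rfl, hxc⟩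
  · obtain ⟨h₁, h₂⟩ := hlow x ⟨hx₀, hxc.trans_lt hc⟩
    exact ⟨h₁.le, h₂.le.trans hxc⟩

lemma mapsTo_Icc_two_pi_of_pi_lt {Ψ : ℝ → ℝ} {c : ℝ} (h2π : Ψ (2 * π) = 2 * π)
    (hhigh : ∀ φ ∈ Ioo π (2 * π), Ψ φ ∈ Ioo φ (2 * π)) (hc : π < c) :
    MapsTo Ψ (Icc c (2 * π)) (Icc c (2 * π)) := by
  rintro x ⟨hcx, hx₂⟩
  rcases hx₂.eq_or_lt with rfl | hx₂
  · rw [h2π]; exact ⟨hcx, le_rfl⟩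
  · obtain ⟨h₁, h₂⟩ := hhigh x ⟨hc.trans_le hcx, hx₂⟩
    exact ⟨hcx.trans h₁.le, h₂.le⟩

/-- diameter monotonicity at jumps, statement 3 of Theorem 1: if all
phases lie in a shortest closed arc `L` of length `d(θ̄) < π`, the jump occurs while some
oscillator `j₀` has phase `0` or `2π`, and every `Ψ_i` satisfies Assumption 1, then all
post-jump phases `θ_i⁺ = Ψ_i^{k_i}(θ_i) (mod 2π)` still lie (as circle points) in `L`,
whence `d(θ̄⁺) ≤ d(θ̄)`. -/
theorem diameter_nonincreasing_at_jump {N : ℕ} (θ : Fin N → ℝ)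
    (hθ : ∀ i, θ i ∈ Set.Icc 0 (2 * π))
    (hd : phaseDiam θ < π)
    (α : ℝ) (L : Set ℂ)
    (hL : L = {z : ℂ | ∃ φ ∈ Set.Icc α (α + phaseDiam θ),
      z = Complex.exp (Complex.I * (φ : ℂ))})
    (hθL : ∀ i, Complex.exp (Complex.I * (θ i : ℂ)) ∈ L)
    (Ψ : Fin N → ℝ → ℝ)
    (h0 : ∀ i, Ψ i 0 = 0) (h2π : ∀ i, Ψ i (2 * π) = 2 * π)
    (hlow : ∀ i, ∀ φ ∈ Set.Ioo 0 π, Ψ i φ ∈ Set.Ioo 0 φ)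
    (hhigh : ∀ i, ∀ φ ∈ Set.Ioo π (2 * π), Ψ i φ ∈ Set.Ioo φ (2 * π))
    (j₀ : Fin N) (hj₀ : θ j₀ = 0 ∨ θ j₀ = 2 * π)
    (k : Fin N → ℕ)
    (θp : Fin N → ℝ) (hθp : ∀ i, θp i = (Ψ i)^[k i] (θ i)) :
    (∀ i, Complex.exp (Complex.I * (θp i : ℂ)) ∈ L) ∧
    phaseDiam θp ≤ phaseDiam θ := by
  set d := phaseDiam θ
  have hone : (1 : ℂ) ∈ circleArc α d := by
    have h := hθL j₀
    rcases hj₀ with h₀ | h₀ <;> simp only [hL, h₀] at h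
    · simpa [circleArc] using h
    · simpa [circleArc, mul_comm Complex.I] using h
  obtain ⟨β, hβ, hβα⟩ := exists_circleArc_eq_of_one_mem hone
  replace hL : L = circleArc β d := hβα ▸ hL
  set S := Icc 0 (β + d) ∪ Icc (2 * π + β) (2 * π)
  have hS : ∀ i, MapsTo (Ψ i) S S := fun i =>
    (mapsTo_Icc_zero_of_lt_pi (h0 i) (hlow i) (by linarith [hβ.2])).union_union
      (mapsTo_Icc_two_pi_of_pi_lt (h2π i) (hhigh i) (by linarith [hβ.1]))
  have hθpS : ∀ i, θp i ∈ S := fun i => hθp i ▸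
    (hS i).iterate (k i) (mem_union_of_exp_I_mul_mem_circleArc hd hβ (hθ i) (hL ▸ hθL i))
  have hθpL : ∀ i, Complex.exp (Complex.I * (θp i : ℂ)) ∈ L := fun i =>
    hL ▸ exp_I_mul_mem_circleArc_of_mem_union hβ (hθpS i)
  exact ⟨hθpL, phaseDiam_le_of_forall_mem_circleArc (phaseDiam_nonneg θ) (hL ▸ hθpL)⟩
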